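/- Let G be a hereditary graph class containing K_2 and B a bipartite graph. Then c_u(G,B) ≤ (c_f(G,B))², i.e., the union G-covering number of a bipartite graph is at most the square of its folded G-covering number. -/

import Mathlib

open SimpleGraph

/-- A class of simple graphs on arbitrary (small) vertex types. -/
def GraphClass : Type 1 := ∀ (V : Type), SimpleGraph V → Prop

/-- The class contains the graph `K₂`. -/
def GraphClass.ContainsK2 (𝒢 : GraphClass) : Prop := 𝒢 (Fin 2) ⊤

/-- Hereditary: closed under induced subgraphs. -/
def GraphClass.Hereditary (𝒢 : GraphClass) : Prop :=
  ∀ (V : Type) (G : SimpleGraph V), 𝒢 V G → ∀ s : Set V, 𝒢 s (G.induce s)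

/-- Monotone: closed under (not necessarily spanning) subgraphs. -/
def GraphClass.MonotoneClass (𝒢 : GraphClass) : Prop :=
  ∀ (V : Type) (G : SimpleGraph V), 𝒢 V G →
    ∀ (s : Set V) (G' : SimpleGraph s), G' ≤ G.induce s → 𝒢 s G'

/-- Component-closed: every connected component of a member is a member. -/
def GraphClass.ComponentClosed (𝒢 : GraphClass) : Prop :=
  ∀ (V : Type) (G : SimpleGraph V), 𝒢 V G →
    ∀ c : G.ConnectedComponent, 𝒢 c.supp (G.induce c.supp)

/-- The vertex-disjoint union of a family of graphs. -/
def disjUnionGraph {ι : Type} {W : ι → Type} (G : ∀ i, SimpleGraph (W i)) :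
    SimpleGraph (Σ i, W i) :=
  SimpleGraph.fromRel (fun p q => ∃ h : p.1 = q.1, (G q.1).Adj (h ▸ p.2) q.2)

/-- Union-closed: closed under finite vertex-disjoint unions. -/
def GraphClass.UnionClosed (𝒢 : GraphClass) : Prop :=
  ∀ (ι : Type), Finite ι → ∀ (W : ι → Type) (G : ∀ i, SimpleGraph (W i)),
    (∀ i, 𝒢 (W i) (G i)) → 𝒢 _ (disjUnionGraph G)

/-- The union-closure of a class: all graphs isomorphic to a finite
vertex-disjoint union of members of the class. -/
def GraphClass.unionClosure (𝒢 : GraphClass) : GraphClass :=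
  fun V G => ∃ (ι : Type) (_ : Finite ι) (W : ι → Type) (Gs : ∀ i, SimpleGraph (W i)),
    (∀ i, 𝒢 (W i) (Gs i)) ∧ Nonempty (G ≃g disjUnionGraph Gs)

/-- A `𝒢`-cover of a host graph `H`: a finite family of finite guest graphs together
with homomorphisms to `H` such that every edge of `H` is hit. -/
structure GraphCover {V : Type} (H : SimpleGraph V) : Type 1 where
  ι : Type
  finι : Finite ι
  W : ι → Type
  finW : ∀ i, Finite (W i)
  G : ∀ i, SimpleGraph (W i)
  φ : ∀ i, G i →g H
  edge_surj : ∀ ⦃u v : V⦄, H.Adj u v → ∃ i, ∃ a b, (G i).Adj a b ∧ φ i a = u ∧ φ i b = v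

namespace GraphCover

variable {V : Type} {H : SimpleGraph V}

/-- All guests belong to the class `𝒢`. -/
def InClass (c : GraphCover H) (𝒢 : GraphClass) : Prop := ∀ i, 𝒢 (c.W i) (c.G i)

/-- The cover is injective on each guest. -/
def Injective (c : GraphCover H) : Prop := ∀ i, Function.Injective (c.φ i)

/-- The total number of preimages of a vertex `v` of the host. -/
noncomputable def mult (c : GraphCover H) (v : V) : ℕ :=
  Nat.card {p : Σ i, c.W i // c.φ p.1 p.2 = v}

/-- `s`-local: every host vertex has at most `s` preimages. -/
def IsLocal (c : GraphCover H) (s : ℕ) : Prop := ∀ v, c.mult v ≤ s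

/-- `t`-global: at most `t` guests are used. -/
def IsGlobal (c : GraphCover H) (t : ℕ) : Prop := Nat.card c.ι ≤ t

/-- The guests can be grouped into `t` groups of pairwise vertex-disjoint guests,
i.e. the cover uses at most `t` members of the union-closure of the class. -/
def IsUnion (c : GraphCover H) (t : ℕ) : Prop :=
  ∃ f : c.ι → Fin t, ∀ i j, i ≠ j → f i = f j →
    Disjoint (Set.range (c.φ i)) (Set.range (c.φ j))

end GraphCover

/-- The global `𝒢`-covering number. -/
noncomputable def globalCN (𝒢 : GraphClass) {V : Type} (H : SimpleGraph V) : ℕ :=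
  sInf {t | ∃ c : GraphCover H, c.InClass 𝒢 ∧ c.Injective ∧ c.IsGlobal t}

/-- The union `𝒢`-covering number. -/
noncomputable def unionCN (𝒢 : GraphClass) {V : Type} (H : SimpleGraph V) : ℕ :=
  sInf {t | ∃ c : GraphCover H, c.InClass 𝒢 ∧ c.Injective ∧ c.IsUnion t}

/-- The local `𝒢`-covering number. -/
noncomputable def localCN (𝒢 : GraphClass) {V : Type} (H : SimpleGraph V) : ℕ :=
  sInf {s | ∃ c : GraphCover H, c.InClass 𝒢 ∧ c.Injective ∧ c.IsLocal s}

/-- The folded `𝒢`-covering number. -/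
noncomputable def foldedCN (𝒢 : GraphClass) {V : Type} (H : SimpleGraph V) : ℕ :=
  sInf {s | ∃ c : GraphCover H, c.InClass 𝒢 ∧ c.IsLocal s}

/-- `H` has treewidth at most `w`, via tree-decompositions. -/
def TreewidthLE {V : Type} (H : SimpleGraph V) (w : ℕ) : Prop :=
  ∃ (ι : Type) (T : SimpleGraph ι) (bag : ι → Set V),
    T.Connected ∧ T.IsAcyclic ∧
    (∀ v, ∃ i, v ∈ bag i) ∧
    (∀ ⦃u v⦄, H.Adj u v → ∃ i, u ∈ bag i ∧ v ∈ bag i) ∧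
    (∀ v, (T.induce {i | v ∈ bag i}).Connected) ∧
    (∀ i, Nat.card (bag i) ≤ w + 1)

/-- `G` has maximum average degree at most `d`. -/
def madLE {V : Type} (G : SimpleGraph V) (d : ℚ) : Prop :=
  ∀ s : Set V, s.Nonempty → (2 * Nat.card (G.induce s).edgeSet : ℚ) ≤ d * Nat.card s

/-- A star forest: an acyclic graph with no path on four vertices, i.e. every
connected component is a star. -/
def IsStarForest {V : Type} (F : SimpleGraph V) : Prop :=
  F.IsAcyclic ∧ ∀ a b c d, F.Adj a b → F.Adj b c → F.Adj c d → a = c ∨ b = d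

/-- `F` is a weak induced subgraph of `H`: a subgraph each of whose connected
components is an induced subgraph of `H`. -/
def IsWeakInduced {V : Type} (F H : SimpleGraph V) : Prop :=
  F ≤ H ∧ ∀ u v, F.Reachable u v → H.Adj u v → F.Adj u v

/-- No induced cycle of length at least 4. -/
def IsChordal {V : Type} (G : SimpleGraph V) : Prop :=
  ∀ (n : ℕ), 4 ≤ n → ∀ s : Set V, ¬ Nonempty ((G.induce s) ≃g SimpleGraph.cycleGraph n)

/-- The intersection graph of a family of sets. -/
def intersectionGraph {ι V : Type} (S : ι → Set V) : SimpleGraph ι :=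
  SimpleGraph.fromRel (fun i j => (S i ∩ S j).Nonempty)

/-- The shift graph of a directed graph `D`: vertices are the directed edges,
and `uv` is adjacent to `xy` iff `v = x` (or symmetrically `y = u`). -/
def shiftGraph {V : Type} (D : V → V → Prop) : SimpleGraph {p : V × V // D p.1 p.2} :=
  SimpleGraph.fromRel (fun e f => e.val.2 = f.val.1)

/-! Number the at most `s` preimages of each host vertex by labels in `Fin s` and fix a proper
`n`-colouring `κ` of the host. For every guest and every `f : Fin n → Fin s`, keep the vertices
whose label is `f` of the colour of their image. Such a piece is an induced subgraph of a guest,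
maps injectively, and pieces with the same `f` have disjoint images, so the `s ^ n` choices of `f`
give a union cover. Every edge `uv` survives in some piece because `κ u ≠ κ v` lets `f` prescribe
the labels of both ends. -/

theorem exists_injective_prodMk_fin_of_card_fiber_le {α β : Type*} [Finite α] (g : α → β)
    {s : ℕ} (h : ∀ b, Nat.card {a // g a = b} ≤ s) :
    ∃ ℓ : α → Fin s, Function.Injective fun a => (g a, ℓ a) := by
  have hfiber (b : β) : ∃ e : {a // g a = b} → Fin s, Function.Injective e :=
    ⟨Fin.castLE (h b) ∘ Finite.equivFin _,
      (Fin.castLE_injective _).comp (Finite.equivFin _).injective⟩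
  choose e he using hfiber
  let ℓ a := e (g a) ⟨a, rfl⟩
  have hℓ {a b} (h : g a = b) : ℓ a = e b ⟨a, h⟩ := by subst h; rfl
  refine ⟨ℓ, fun a a' haa' => ?_⟩
  obtain ⟨hg, hla⟩ := Prod.mk.inj haa'
  rw [hℓ hg, hℓ rfl] at hla
  exact congrArg Subtype.val (he _ hla)

namespace GraphCover

variable {V : Type} {H : SimpleGraph V}

def sigmaMap (c : GraphCover H) (p : Σ i, c.W i) : V := c.φ p.1 p.2

theorem isLocal_card_sigma (c : GraphCover H) : c.IsLocal (Nat.card (Σ i, c.W i)) := by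
  have := c.finι
  have := c.finW
  exact fun v => Nat.card_le_card_of_injective Subtype.val Subtype.val_injective

theorem exists_label_of_isLocal (c : GraphCover H) {s : ℕ} (hs : c.IsLocal s) :
    ∃ ℓ : (Σ i, c.W i) → Fin s, Function.Injective fun p => (c.sigmaMap p, ℓ p) :=
  have := c.finι
  have := c.finW
  exists_injective_prodMk_fin_of_card_fiber_le c.sigmaMap hs

section SplitByLabel

variable {n s : ℕ} (c : GraphCover H) (κ : H.Coloring (Fin n)) (ℓ : (Σ i, c.W i) → Fin s)

def labelSet (k : c.ι) (f : Fin n → Fin s) : Set (c.W k) :=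
  {a | ℓ ⟨k, a⟩ = f (κ (c.φ k a))}

/-- For a bipartite host and `f = ![i, j]`, the piece `(k, f)` is the paper's induced subgraph of
the `k`-th guest on the `i`-th copies of `X` and the `j`-th copies of `Y`. -/
def splitByLabel : GraphCover H where
  ι := c.ι × (Fin n → Fin s)
  finι := have := c.finι; inferInstance
  W t := c.labelSet κ ℓ t.1 t.2
  finW t := have := c.finW t.1; inferInstance
  G t := (c.G t.1).induce (c.labelSet κ ℓ t.1 t.2)
  φ t := (c.φ t.1).comp (Embedding.induce _).toHom
  edge_surj u v huv := by
    obtain ⟨k, a, b, hab, rfl, rfl⟩ := c.edge_surj huv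
    let f := Function.update (fun _ => ℓ ⟨k, a⟩) (κ (c.φ k b)) (ℓ ⟨k, b⟩)
    have ha : a ∈ c.labelSet κ ℓ k f := by
      simp [labelSet, f, Function.update_of_ne (κ.valid huv)]
    have hb : b ∈ c.labelSet κ ℓ k f := by simp [labelSet, f]
    exact ⟨(k, f), ⟨a, ha⟩, ⟨b, hb⟩, hab, rfl, rfl⟩

variable {c κ ℓ}

theorem splitByLabel_inClass {𝒢 : GraphClass} (hher : 𝒢.Hereditary) (hc : c.InClass 𝒢) :
    (c.splitByLabel κ ℓ).InClass 𝒢 :=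
  fun t => hher _ _ (hc t.1) _

theorem eq_of_mem_labelSet (hℓ : Function.Injective fun p => (c.sigmaMap p, ℓ p))
    {f : Fin n → Fin s} {k k' : c.ι} {a : c.W k} {a' : c.W k'}
    (ha : a ∈ c.labelSet κ ℓ k f) (ha' : a' ∈ c.labelSet κ ℓ k' f)
    (h : c.φ k a = c.φ k' a') : (⟨k, a⟩ : Σ i, c.W i) = ⟨k', a'⟩ :=
  hℓ (Prod.ext h (show ℓ _ = ℓ _ by rw [ha, ha', h]))

theorem splitByLabel_injective (hℓ : Function.Injective fun p => (c.sigmaMap p, ℓ p)) :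
    (c.splitByLabel κ ℓ).Injective := by
  rintro ⟨k, f⟩ ⟨a, ha⟩ ⟨b, hb⟩ h
  exact Subtype.ext (sigma_mk_injective (eq_of_mem_labelSet hℓ ha hb h))

theorem splitByLabel_isUnion (hℓ : Function.Injective fun p => (c.sigmaMap p, ℓ p)) :
    (c.splitByLabel κ ℓ).IsUnion (s ^ n) := by
  refine ⟨fun t => finFunctionFinEquiv t.2, ?_⟩
  rintro ⟨k, f⟩ ⟨k', f'⟩ hne hf
  obtain rfl : f = f' := finFunctionFinEquiv.injective hf
  rw [Set.disjoint_left]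
  rintro _ ⟨⟨a, ha⟩, rfl⟩ ⟨⟨a', ha'⟩, h⟩
  have := eq_of_mem_labelSet hℓ ha ha' h.symm
  exact hne (by rw [show k = k' from congrArg Sigma.fst this])

end SplitByLabel

end GraphCover

theorem unionCN_le_foldedCN_pow_of_coloring (𝒢 : GraphClass) (hher : 𝒢.Hereditary)
    {V : Type} {B : SimpleGraph V} {n : ℕ} (κ : B.Coloring (Fin n)) :
    unionCN 𝒢 B ≤ foldedCN 𝒢 B ^ n := by
  -- Without any union cover `unionCN = sInf ∅ = 0`; with one, the folded minimum is attained.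
  rcases Nat.eq_zero_or_pos (unionCN 𝒢 B) with h0 | hpos
  · exact h0 ▸ Nat.zero_le _
  obtain ⟨-, c₀, hc₀, -, -⟩ := Nat.nonempty_of_pos_sInf hpos
  obtain ⟨c, hc, hloc⟩ : foldedCN 𝒢 B ∈ {s | ∃ c : GraphCover B, c.InClass 𝒢 ∧ c.IsLocal s} :=
    Nat.sInf_mem ⟨_, c₀, hc₀, c₀.isLocal_card_sigma⟩
  obtain ⟨ℓ, hℓ⟩ := c.exists_label_of_isLocal hloc
  exact Nat.sInf_le ⟨c.splitByLabel κ ℓ, GraphCover.splitByLabel_inClass hher hc,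
    GraphCover.splitByLabel_injective hℓ, GraphCover.splitByLabel_isUnion hℓ⟩

theorem union_le_folded_sq_bipartite_general (𝒢 : GraphClass)
    (hher : 𝒢.Hereditary) {V : Type} (B : SimpleGraph V)
    (hbip : B.Colorable 2) :
    unionCN 𝒢 B ≤ (foldedCN 𝒢 B) ^ 2 :=
  unionCN_le_foldedCN_pow_of_coloring 𝒢 hher hbip.some

/-- for a hereditary guest class and a bipartite host `B`,
`c_u(𝒢,B) ≤ c_f(𝒢,B)²`. -/
theorem union_le_folded_sq_bipartite (𝒢 : GraphClass) (h2 : 𝒢.ContainsK2)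
    (hher : 𝒢.Hereditary) {V : Type} [Fintype V] (B : SimpleGraph V)
    (hbip : B.Colorable 2) :
    unionCN 𝒢 B ≤ (foldedCN 𝒢 B) ^ 2 :=
  union_le_folded_sq_bipartite_general 𝒢 hher B hbip
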